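/- arXiv:1609.00303 — 3 statements merged into one kernel-verified Lean document; each statement's English description precedes it below -/
import Mathlib

section
/- Let X be a dendrite, C a closed subset of X, and x an end point of X (a point of Menger–Urysohn order 1, i.e., X ∖ {x} is connected and x admits a neighbourhood basis of open sets with one-point boundary). If x lies in the smallest closed connected subset [C] of X containing C, then x ∈ C. -/
open Set

/-- A dendrite: a nonempty compact connected metrizable space that is locally
connected and contains no simple closed curve. -/
def IsDendrite (X : Type*) [TopologicalSpace X] : Prop :=
  Nonempty X ∧ CompactSpace X ∧ ConnectedSpace X ∧ TopologicalSpace.MetrizableSpace X ∧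
    LocallyConnectedSpace X ∧ ¬ ∃ S : Set X, Nonempty (S ≃ₜ Circle)

/-- An end point of a dendrite can be separated from closed sets: if an end point `x`
(i.e. a point with connected complement) lies in the smallest closed connected subset
`[C]` containing a closed set `C`, then `x ∈ C`. -/
theorem endPoint_mem_of_mem_dendriteHull (X : Type*) [TopologicalSpace X]
    (hX : IsDendrite X) (C : Set X) (hC : IsClosed C) (x : X)
    (hx : IsConnected ({x}ᶜ : Set X))
    (hmem : x ∈ ⋂₀ {D : Set X | IsClosed D ∧ IsPreconnected D ∧ C ⊆ D}) :
    x ∈ C := by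
  obtain ⟨-, hcomp, -, hmetr, hloc, -⟩ := hX
  haveI := hcomp; haveI := hmetr; haveI := hloc
  by_contra hxC
  rcases C.eq_empty_or_nonempty with rfl | ⟨c₀, hc₀⟩
  · exact hmem ∅ ⟨isClosed_empty, isPreconnected_empty, Subset.rfl⟩
  have hc₀x : c₀ ≠ x := fun h => hxC (h ▸ hc₀)
  -- for every y ≠ x there is an open connected W ∋ y with closure W ⊆ {x}ᶜ
  have key : ∀ y : X, y ≠ x → ∃ W : Set X,
      IsOpen W ∧ IsPreconnected W ∧ y ∈ W ∧ closure W ⊆ ({x}ᶜ : Set X) := by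
    intro y hy
    have hnx : ({x}ᶜ : Set X) ∈ nhds y :=
      isOpen_compl_singleton.mem_nhds (by simpa using hy)
    obtain ⟨t, ht, htc, hts⟩ := exists_mem_nhds_isClosed_subset hnx
    obtain ⟨W, hWt, hWo, hyW, hWconn⟩ :=
      locallyConnectedSpace_iff_subsets_isOpen_isConnected.mp hloc y t ht
    exact ⟨W, hWo, hWconn.isPreconnected, hyW, (closure_minimal hWt htc).trans hts⟩
  choose W hWo hWc hWmem hWx using key
  -- the set of points connectable to c₀ inside {x}ᶜ by a closed preconnected set
  set S : Set X := {y | ∃ K : Set X, IsClosed K ∧ IsPreconnected K ∧ K ⊆ ({x}ᶜ : Set X)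
      ∧ c₀ ∈ K ∧ y ∈ K} with hSdef
  have hSsub : S ⊆ ({x}ᶜ : Set X) := fun y ⟨K, _, _, hKx, _, hyK⟩ => hKx hyK
  have hc₀S : c₀ ∈ S := ⟨{c₀}, isClosed_singleton, isPreconnected_singleton,
    by simpa [eq_comm] using hc₀x, rfl, rfl⟩
  -- if the W-neighborhood of a point meets S, the whole W-neighborhood is in S
  have absorb : ∀ (y : X) (hy : y ≠ x), (W y hy ∩ S).Nonempty → W y hy ⊆ S := by
    rintro y hy ⟨z, hzW, K, hKcl, hKc, hKx, hKc₀, hzK⟩ w hwW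
    exact ⟨K ∪ closure (W y hy), hKcl.union isClosed_closure,
      hKc.union z hzK (subset_closure hzW) (hWc y hy).closure,
      union_subset hKx (hWx y hy), Or.inl hKc₀, Or.inr (subset_closure hwW)⟩
  -- S and {x}ᶜ \ S are both open
  have hSo : IsOpen S := by
    refine isOpen_iff_forall_mem_open.mpr fun y hyS => ?_
    have hy : y ≠ x := fun h => (hSsub hyS) (by simp [h])
    exact ⟨W y hy, absorb y hy ⟨y, hWmem y hy, hyS⟩, hWo y hy, hWmem y hy⟩
  have hTo : IsOpen (({x}ᶜ : Set X) \ S) := by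
    refine isOpen_iff_forall_mem_open.mpr fun y ⟨hyx, hyS⟩ => ?_
    have hy : y ≠ x := by simpa using hyx
    refine ⟨W y hy, fun w hwW => ⟨subset_closure.trans (hWx y hy) hwW, fun hwS => ?_⟩,
      hWo y hy, hWmem y hy⟩
    exact hyS (absorb y hy ⟨w, hwW, hwS⟩ (hWmem y hy))
  -- by connectedness of {x}ᶜ, S covers {x}ᶜ
  have hcover : ({x}ᶜ : Set X) ⊆ S := by
    by_contra hns
    rw [not_subset] at hns
    obtain ⟨y₀, hy₀x, hy₀S⟩ := hns
    obtain ⟨z, hz⟩ := hx.isPreconnected S (({x}ᶜ : Set X) \ S) hSo hTo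
      (fun w hw => by by_cases h : w ∈ S; exacts [Or.inl h, Or.inr ⟨hw, h⟩])
      ⟨c₀, by simpa using hc₀x, hc₀S⟩ ⟨y₀, hy₀x, hy₀x, hy₀S⟩
    exact hz.2.2.2 hz.2.1
  -- choose connecting sets for points of C
  have hCK : ∀ c ∈ C, ∃ K : Set X, IsClosed K ∧ IsPreconnected K ∧ K ⊆ ({x}ᶜ : Set X)
      ∧ c₀ ∈ K ∧ c ∈ K := fun c hc =>
    hcover (by simpa using (fun h : c = x => hxC (h ▸ hc) : c ≠ x))
  choose! K hKcl hKc hKx hKc₀ hKmem using hCK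
  -- cover C by finitely many W-neighborhoods
  have hCne : ∀ c ∈ C, c ≠ x := fun c hc h => hxC (h ▸ hc)
  obtain ⟨t, htcov⟩ := hC.isCompact.elim_nhds_subcover'
    (fun c hc => W c (hCne c hc)) (fun c hc => (hWo c (hCne c hc)).mem_nhds (hWmem c (hCne c hc)))
  -- the final closed preconnected set
  set D : Set X := ⋃ c ∈ t, (K c ∪ closure (W c (hCne c c.2))) with hDdef
  have hDval : ∀ c ∈ t, IsPreconnected (K (c : X) ∪ closure (W c (hCne c c.2))) ∧
      c₀ ∈ K (c : X) ∪ closure (W c (hCne c c.2)) := by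
    intro c hc
    refine ⟨IsPreconnected.union (↑c) (hKmem c c.2) (subset_closure (hWmem c (hCne c c.2)))
      (hKc c c.2) (hWc c (hCne c c.2)).closure, Or.inl (hKc₀ c c.2)⟩
  have hDcl : IsClosed D :=
    isClosed_biUnion_finset (fun c _ => (hKcl c c.2).union isClosed_closure)
  have hDc : IsPreconnected D := by
    have hrw : D = ⋃₀ ((fun c : ↥C => K ↑c ∪ closure (W ↑c (hCne ↑c c.2))) '' ↑t) := by
      rw [sUnion_image, Finset.set_biUnion_coe]
    rw [hrw]
    refine isPreconnected_sUnion c₀ _ ?_ ?_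
    · rintro s ⟨c, hc, rfl⟩; exact (hDval c (Finset.mem_coe.mp hc)).2
    · rintro s ⟨c, hc, rfl⟩; exact (hDval c (Finset.mem_coe.mp hc)).1
  have hDC : C ⊆ D := by
    intro c hc
    obtain ⟨i, hi, hci⟩ := mem_iUnion₂.mp (htcov hc)
    exact mem_iUnion₂.mpr ⟨i, hi, Or.inr (subset_closure hci)⟩
  have hxD : x ∈ D := hmem D ⟨hDcl, hDc, hDC⟩
  obtain ⟨i, hi, hxi⟩ := mem_iUnion₂.mp hxD
  rcases hxi with h | h
  · exact (hKx i i.2 h) rfl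
  · exact (hWx i (hCne i i.2) h) rfl
end

section
/- Let g be a homeomorphism of a dendrite X, and let I₁ = [x₁,y₁] and I₂ = [x₂,y₂] be two distinct austro-boreal arcs for g. Then the open arcs I₁ ∖ {x₁,y₁} and I₂ ∖ {x₂,y₂} are disjoint. -/
open Set

/-!
Without simple closed curves, arcs are determined by their endpoints: if a point of one arc
missed another arc with the same ends, the gap of the first arc around it, closed up by the piece
of the second arc between the ends of the gap, would be a circle. So a homeomorphism `g` fixing
the ends of an arc maps it onto itself, and it preserves the intersection `J` of two such
invariant arcs. Let `γ` parametrise the first arc and let `γ s` be the first point of `J` on it.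
Then `g` maps `γ [0, s]` onto the subarc from `γ 0` to `g (γ s) ∈ J`, which therefore reaches at
least as far as `γ s`; hence `γ s = g k` for some `k ∈ γ [0, s]`, and `k ∈ J` forces `k = γ s`.
So the first and the last point of `J` on an arc are fixed. For an austro-boreal arc `A` meeting
an invariant arc `B` in an interior point they must be the ends of `A`; if `B` is austro-boreal
as well, the ends of `A` are the fixed ends of `B`, and `A = B`.
-/

section

open Function unitInterval

variable {X : Type*} [TopologicalSpace X] {A B : Set X} {u v : X}

def IsArc (A : Set X) (u v : X) : Prop :=
  ∃ γ : Path u v, Injective γ ∧ range γ = A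

lemma isArc_image_Icc {f : ℝ → X} (hc : ContinuousOn f (Icc 0 1)) (hi : InjOn f (Icc 0 1)) :
    IsArc (f '' Icc 0 1) (f 0) (f 1) :=
  ⟨Path.ofLine hc rfl rfl, fun s t h => Subtype.ext (hi s.2 t.2 h), by
    change range (f ∘ ((↑) : I → ℝ)) = _
    rw [range_comp, Subtype.range_coe]⟩

lemma Set.Icc.convexComb_injective {a b : ℝ} {x y : Icc a b} (hxy : x ≠ y) :
    Injective (Icc.convexComb x y) := by
  intro s t h
  have h' : ((s : ℝ) - t) * (y - x) = 0 := by
    have := congrArg Subtype.val h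
    simp only [Icc.coe_convexComb] at this
    linear_combination this
  have hxy' : (y : ℝ) - x ≠ 0 := sub_ne_zero.2 fun h => hxy (Subtype.ext h.symm)
  exact Subtype.ext (sub_eq_zero.1 ((mul_eq_zero.1 h').resolve_right hxy'))

namespace IsArc

lemma isCompact (h : IsArc A u v) : IsCompact A := by
  obtain ⟨γ, -, rfl⟩ := h
  exact isCompact_range γ.continuous

lemma left_mem (h : IsArc A u v) : u ∈ A := by
  obtain ⟨γ, -, rfl⟩ := h
  exact γ.source_mem_range

lemma right_mem (h : IsArc A u v) : v ∈ A := by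
  obtain ⟨γ, -, rfl⟩ := h
  exact γ.target_mem_range

lemma ne (h : IsArc A u v) : u ≠ v := by
  obtain ⟨γ, hγ, -⟩ := h
  simpa using hγ.ne (zero_ne_one (α := I))

lemma symm (h : IsArc A u v) : IsArc A v u := by
  obtain ⟨γ, hγ, rfl⟩ := h
  exact ⟨γ.symm, hγ.comp symm_involutive.injective, γ.symm_range⟩

lemma image {Y : Type*} [TopologicalSpace Y] {g : X → Y} (hg : Continuous g) (hinj : Injective g)
    (h : IsArc A u v) : IsArc (g '' A) (g u) (g v) := by
  obtain ⟨γ, hγ, rfl⟩ := h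
  exact ⟨γ.map hg, hinj.comp hγ, by rw [Path.map_coe, range_comp]⟩

end IsArc

lemma Path.isArc_image_uIcc {γ : Path u v} (hγ : Injective γ) {s t : I} (hst : s ≠ t) :
    IsArc (γ '' uIcc s t) (γ s) (γ t) :=
  ⟨γ.subpath s t, hγ.comp (Icc.convexComb_injective hst), γ.range_subpath s t⟩

lemma IsArc.exists_subarc (h : IsArc A u v) {x y : X} (hx : x ∈ A) (hy : y ∈ A) (hxy : x ≠ y) :
    ∃ A' ⊆ A, IsArc A' x y := by
  obtain ⟨γ, hγ, rfl⟩ := h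
  obtain ⟨s, rfl⟩ := hx
  obtain ⟨t, rfl⟩ := hy
  exact ⟨_, image_subset_range _ _, γ.isArc_image_uIcc hγ (ne_of_apply_ne γ hxy)⟩

lemma IsCompact.exists_gap_around {α : Type*} [LinearOrder α] [TopologicalSpace α]
    [OrderClosedTopology α] {C : Set α} (hC : IsCompact C) {a b r : α} (ha : a ∈ C) (hb : b ∈ C)
    (har : a ≤ r) (hrb : r ≤ b) (hr : r ∉ C) :
    ∃ s ∈ C, ∃ t ∈ C, s < r ∧ r < t ∧ ∀ q ∈ Ioo s t, q ∉ C := by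
  obtain ⟨s, ⟨hsC, hsr⟩, hs⟩ := (hC.inter_right isClosed_Iic).exists_isGreatest ⟨a, ha, har⟩
  obtain ⟨t, ⟨htC, hrt⟩, ht⟩ := (hC.inter_right isClosed_Ici).exists_isLeast ⟨b, hb, hrb⟩
  refine ⟨s, hsC, t, htC, hsr.lt_of_ne (ne_of_mem_of_not_mem hsC hr),
    hrt.lt_of_ne (ne_of_mem_of_not_mem htC hr).symm, fun q hq hqC => ?_⟩
  rcases le_total q r with hqr | hrq
  · exact (hs ⟨hqC, hqr⟩).not_gt hq.1
  · exact (ht ⟨hqC, hrq⟩).not_gt hq.2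

lemma Path.exists_circle_of_injOn [T2Space X] {x : X} (γ : Path x x)
    (hγ : InjOn γ {t | (t : ℝ) < 1}) : ∃ S : Set X, Nonempty (S ≃ₜ Circle) := by
  have : Fact ((0 : ℝ) < 1) := ⟨one_pos⟩
  let G : AddCircle (1 : ℝ) → X := AddCircle.liftIco 1 0 γ.extend
  have hG : ∀ a (ha : a ∈ Ico (0 : ℝ) 1), G a = γ ⟨a, ha.1, ha.2.le⟩ := fun a ha =>
    (AddCircle.liftIco_zero_coe_apply ha).trans (γ.extend_extends' ⟨a, ha.1, ha.2.le⟩)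
  have hGc : Continuous G :=
    AddCircle.liftIco_zero_continuous (by simp) γ.continuous_extend.continuousOn
  have hGi : Injective G := by
    have hsurj := AddCircle.coe_image_Ico_eq (1 : ℝ) 0
    rw [zero_add] at hsurj
    intro y z hyz
    obtain ⟨a, ha, rfl⟩ := hsurj.symm ▸ mem_univ y
    obtain ⟨b, hb, rfl⟩ := hsurj.symm ▸ mem_univ z
    rw [hG a ha, hG b hb] at hyz
    exact congrArg _ (congrArg Subtype.val (hγ ha.2 hb.2 hyz))
  exact ⟨range G, ⟨(hGc.isClosedEmbedding hGi).isEmbedding.toHomeomorph.symm.trans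
    (AddCircle.homeomorphCircle one_ne_zero)⟩⟩

lemma IsArc.exists_circle_of_inter_subset [T2Space X] (hA : IsArc A u v) (hB : IsArc B u v)
    (hAB : A ∩ B ⊆ {u, v}) : ∃ S : Set X, Nonempty (S ≃ₜ Circle) := by
  obtain ⟨γ, hγ, rfl⟩ := hA
  obtain ⟨δ, hδ, rfl⟩ := hB
  have hδ' : Injective δ.symm := hδ.comp symm_involutive.injective
  have hmeet : ∀ c : I, 0 < (c : ℝ) → (c : ℝ) < 1 → δ.symm c ∉ range γ := by
    intro c hc0 hc1 hc
    rcases hAB ⟨hc, δ.symm_range ▸ mem_range_self c⟩ with hu | hv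
    · exact hc1.ne (congrArg Subtype.val (hδ' (hu.trans δ.symm.target.symm)))
    · exact hc0.ne' (congrArg Subtype.val (hδ' (hv.trans δ.symm.source.symm)))
  refine (γ.trans δ.symm).exists_circle_of_injOn
    fun a (ha : (a : ℝ) < 1) b (hb : (b : ℝ) < 1) hab => ?_
  simp only [Path.trans_apply] at hab
  split_ifs at hab with hah hbh hbh
  · have := congrArg Subtype.val (hγ hab)
    exact Subtype.ext (by simpa using this)
  · exact (hmeet _ (by dsimp only; linarith) (by dsimp only; linarith) ⟨_, hab⟩).elim
  · exact (hmeet _ (by dsimp only; linarith) (by dsimp only; linarith) ⟨_, hab.symm⟩).elim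
  · have := congrArg Subtype.val (hδ' hab)
    exact Subtype.ext (by simpa using this)

lemma IsArc.subset_of_isArc [T2Space X] (hnc : ¬∃ S : Set X, Nonempty (S ≃ₜ Circle))
    (hA : IsArc A u v) (hB : IsArc B u v) : A ⊆ B := by
  obtain ⟨γ, hγ, rfl⟩ := hA
  rintro _ ⟨r, rfl⟩
  by_contra hr
  have hC : IsCompact (γ ⁻¹' B) := (hB.isCompact.isClosed.preimage γ.continuous).isCompact
  obtain ⟨s, hs, t, ht, hsr, hrt, hgap⟩ := hC.exists_gap_around (a := 0) (b := 1)
    (by simpa using hB.left_mem) (by simpa using hB.right_mem) nonneg' le_one' hr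
  obtain ⟨B', hB'B, hB'⟩ := hB.exists_subarc hs ht (hγ.ne (hsr.trans hrt).ne)
  refine hnc ((γ.isArc_image_uIcc hγ (hsr.trans hrt).ne).exists_circle_of_inter_subset hB' ?_)
  rintro _ ⟨⟨q, hq, rfl⟩, hqB⟩
  rw [uIcc_of_le (hsr.trans hrt).le] at hq
  by_contra hqst
  simp only [mem_insert_iff, mem_singleton_iff, hγ.eq_iff, not_or] at hqst
  exact hgap q ⟨hq.1.lt_of_ne (Ne.symm hqst.1), hq.2.lt_of_ne hqst.2⟩ (hB'B hqB)

lemma IsArc.eq_of_isArc [T2Space X] (hnc : ¬∃ S : Set X, Nonempty (S ≃ₜ Circle))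
    (hA : IsArc A u v) (hB : IsArc B u v) : A = B :=
  (hA.subset_of_isArc hnc hB).antisymm (hB.subset_of_isArc hnc hA)

lemma IsArc.image_eq_self [T2Space X] (hnc : ¬∃ S : Set X, Nonempty (S ≃ₜ Circle))
    (hA : IsArc A u v) {g : X → X} (hg : Continuous g) (hinj : Injective g) (hu : g u = u)
    (hv : g v = v) : g '' A = A := by
  have := hA.image hg hinj
  rw [hu, hv] at this
  exact this.eq_of_isArc hnc hA

lemma Path.apply_eq_self_of_isLeast [T2Space X] (hnc : ¬∃ S : Set X, Nonempty (S ≃ₜ Circle))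
    {γ : Path u v} (hγ : Injective γ) {g : X → X} (hg : Continuous g) (hinj : Injective g)
    (hu : g u = u) {J : Set X} (hJ : g '' J = J) (hJγ : J ⊆ range γ) {s : I}
    (hs : IsLeast (γ ⁻¹' J) s) : g (γ s) = γ s := by
  obtain rfl | hs0 := eq_or_ne s 0
  · rw [γ.source, hu]
  have hgs : g (γ s) ∈ J := hJ ▸ mem_image_of_mem g hs.1
  obtain ⟨q, hq⟩ := hJγ hgs
  obtain hqs | hsq := le_or_gt q s
  · rw [← hq, le_antisymm hqs (hs.2 (show γ q ∈ J from hq ▸ hgs))]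
  have hK : g '' (γ '' uIcc 0 s) = γ '' uIcc 0 q := by
    have hKg := (γ.isArc_image_uIcc hγ hs0.symm).image hg hinj
    have hKq := γ.isArc_image_uIcc hγ (nonneg'.trans_lt hsq).ne
    rw [← hq, γ.source, hu] at hKg
    rw [γ.source] at hKq
    exact hKg.eq_of_isArc hnc hKq
  obtain ⟨_, ⟨p, hp, rfl⟩, hgp⟩ : γ s ∈ g '' (γ '' uIcc 0 s) :=
    hK ▸ mem_image_of_mem γ (by simp [uIcc_of_le, hsq.le])
  have hpJ : γ p ∈ J := by
    rw [← hinj.preimage_image J, hJ, mem_preimage, hgp]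
    exact hs.1
  rw [uIcc_of_le nonneg'] at hp
  rwa [le_antisymm hp.2 (hs.2 hpJ)] at hgp

lemma Path.apply_eq_self_of_isGreatest [T2Space X]
    (hnc : ¬∃ S : Set X, Nonempty (S ≃ₜ Circle)) {γ : Path u v} (hγ : Injective γ) {g : X → X}
    (hg : Continuous g) (hinj : Injective g) (hv : g v = v) {J : Set X} (hJ : g '' J = J)
    (hJγ : J ⊆ range γ) {t : I} (ht : IsGreatest (γ ⁻¹' J) t) : g (γ t) = γ t := by
  have hσt : IsLeast (γ.symm ⁻¹' J) (σ t) :=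
    ⟨by simpa using ht.1, fun q hq => symm_le_comm.2 (ht.2 hq)⟩
  simpa using γ.symm.apply_eq_self_of_isLeast hnc (hγ.comp symm_involutive.injective) hg hinj hv
    hJ (γ.symm_range ▸ hJγ) hσt

def IsAustroBoreal (g : X → X) (A : Set X) (u v : X) : Prop :=
  IsArc A u v ∧ {x | g x = x} ∩ A = {u, v}

namespace IsAustroBoreal

variable {g : X → X}

lemma mem_endpoints (h : IsAustroBoreal g A u v) {x : X} (hx : g x = x) (hxA : x ∈ A) :
    x = u ∨ x = v := by
  have hx' : x ∈ {x | g x = x} ∩ A := ⟨hx, hxA⟩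
  rwa [h.2] at hx'

lemma apply_left (h : IsAustroBoreal g A u v) : g u = u :=
  (h.2.symm ▸ mem_insert u {v} : u ∈ {x | g x = x} ∩ A).1

lemma apply_right (h : IsAustroBoreal g A u v) : g v = v :=
  (h.2.symm ▸ mem_insert_of_mem u rfl : v ∈ {x | g x = x} ∩ A).1

lemma image_eq_self [T2Space X] (hnc : ¬∃ S : Set X, Nonempty (S ≃ₜ Circle))
    (h : IsAustroBoreal g A u v) (hg : Continuous g) (hinj : Injective g) : g '' A = A :=
  h.1.image_eq_self hnc hg hinj h.apply_left h.apply_right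

lemma endpoints_mem [T2Space X] (hnc : ¬∃ S : Set X, Nonempty (S ≃ₜ Circle))
    (h : IsAustroBoreal g A u v) (hg : Continuous g) (hinj : Injective g) (hB : IsClosed B)
    (hgB : g '' B = B) {p : X} (hpA : p ∈ A \ {u, v}) (hpB : p ∈ B) : u ∈ B ∧ v ∈ B := by
  have hgA := h.image_eq_self hnc hg hinj
  obtain ⟨γ, hγ, rfl⟩ := h.1
  obtain ⟨⟨r, rfl⟩, hr⟩ := hpA
  simp only [mem_insert_iff, mem_singleton_iff, not_or, ← γ.source, ← γ.target, hγ.eq_iff] at hr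
  have hfix : ∀ q, g (γ q) = γ q → q = 0 ∨ q = 1 := fun q hq =>
    (h.mem_endpoints hq (mem_range_self q)).imp (fun e => hγ (e.trans γ.source.symm))
      (fun e => hγ (e.trans γ.target.symm))
  set J := range γ ∩ B
  have hJ : g '' J = J := by rw [image_inter hinj, hgA, hgB]
  have hrJ : r ∈ γ ⁻¹' J := ⟨mem_range_self r, hpB⟩
  have hT : IsCompact (γ ⁻¹' J) := by
    rw [preimage_inter, preimage_range, univ_inter]
    exact (hB.preimage γ.continuous).isCompact
  obtain ⟨s, hs⟩ := hT.exists_isLeast ⟨r, hrJ⟩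
  obtain ⟨t, ht⟩ := hT.exists_isGreatest ⟨r, hrJ⟩
  have hs0 : s = 0 :=
    (hfix s (γ.apply_eq_self_of_isLeast hnc hγ hg hinj h.apply_left hJ inter_subset_left hs))
      |>.resolve_right fun hs1 => hr.2 (le_antisymm le_one' (hs1 ▸ hs.2 hrJ))
  have ht1 : t = 1 :=
    (hfix t (γ.apply_eq_self_of_isGreatest hnc hγ hg hinj h.apply_right hJ inter_subset_left ht))
      |>.resolve_left fun ht0 => hr.1 (le_antisymm (ht0 ▸ ht.2 hrJ) nonneg')
  exact ⟨γ.source ▸ hs0 ▸ hs.1.2, γ.target ▸ ht1 ▸ ht.1.2⟩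

lemma eq_of_mem_interior [T2Space X] (hnc : ¬∃ S : Set X, Nonempty (S ≃ₜ Circle))
    (hg : Continuous g) (hinj : Injective g) {u' v' : X} (hA : IsAustroBoreal g A u v)
    (hB : IsAustroBoreal g B u' v') {p : X} (hpA : p ∈ A \ {u, v}) (hpB : p ∈ B) : A = B := by
  obtain ⟨huB, hvB⟩ := hA.endpoints_mem hnc hg hinj hB.1.isCompact.isClosed
    (hB.image_eq_self hnc hg hinj) hpA hpB
  rcases hB.mem_endpoints hA.apply_left huB with rfl | rfl <;>
    rcases hB.mem_endpoints hA.apply_right hvB with rfl | rfl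
  · exact absurd rfl hA.1.ne
  · exact hA.1.eq_of_isArc hnc hB.1
  · exact hA.1.eq_of_isArc hnc hB.1.symm
  · exact absurd rfl hA.1.ne

end IsAustroBoreal

end

theorem austroBoreal_interiors_disjoint_general (X : Type*) [TopologicalSpace X]
    (hX : IsDendrite X) (g : X ≃ₜ X) (f₁ f₂ : ℝ → X)
    (hf₁c : ContinuousOn f₁ (Icc 0 1)) (hf₁i : InjOn f₁ (Icc 0 1))
    (hf₂c : ContinuousOn f₂ (Icc 0 1)) (hf₂i : InjOn f₂ (Icc 0 1))
    (hab₁ : {x : X | g x = x} ∩ (f₁ '' Icc 0 1) = {f₁ 0, f₁ 1})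
    (hab₂ : {x : X | g x = x} ∩ (f₂ '' Icc 0 1) = {f₂ 0, f₂ 1})
    (hdist : f₁ '' Icc 0 1 ≠ f₂ '' Icc 0 1) :
    (f₁ '' Icc 0 1 \ {f₁ 0, f₁ 1}) ∩ (f₂ '' Icc 0 1 \ {f₂ 0, f₂ 1}) = ∅ := by
  obtain ⟨-, -, -, _, -, hnc⟩ := hX
  have h₁ : IsAustroBoreal g (f₁ '' Icc 0 1) (f₁ 0) (f₁ 1) := ⟨isArc_image_Icc hf₁c hf₁i, hab₁⟩
  have h₂ : IsAustroBoreal g (f₂ '' Icc 0 1) (f₂ 0) (f₂ 1) := ⟨isArc_image_Icc hf₂c hf₂i, hab₂⟩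
  refine eq_empty_iff_forall_notMem.2 fun p hp => hdist ?_
  exact h₁.eq_of_mem_interior hnc g.continuous g.injective h₂ hp.1 hp.2.1

/-- Two distinct austro-boreal arcs of a homeomorphism of a dendrite have disjoint
interiors (the arcs minus their endpoints). -/
theorem austroBoreal_interiors_disjoint (X : Type*) [TopologicalSpace X]
    (hX : IsDendrite X) (g : X ≃ₜ X) (f₁ f₂ : ℝ → X)
    (hf₁c : ContinuousOn f₁ (Icc 0 1)) (hf₁i : InjOn f₁ (Icc 0 1))
    (hf₂c : ContinuousOn f₂ (Icc 0 1)) (hf₂i : InjOn f₂ (Icc 0 1))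
    (hend₁ : f₁ 0 ≠ f₁ 1) (hend₂ : f₂ 0 ≠ f₂ 1)
    (hab₁ : {x : X | g x = x} ∩ (f₁ '' Icc 0 1) = {f₁ 0, f₁ 1})
    (hab₂ : {x : X | g x = x} ∩ (f₂ '' Icc 0 1) = {f₂ 0, f₂ 1})
    (hdist : f₁ '' Icc 0 1 ≠ f₂ '' Icc 0 1) :
    (f₁ '' Icc 0 1 \ {f₁ 0, f₁ 1}) ∩ (f₂ '' Icc 0 1 \ {f₂ 0, f₂ 1}) = ∅ :=
  austroBoreal_interiors_disjoint_general X hX g f₁ f₂ hf₁c hf₁i hf₂c hf₂i hab₁ hab₂ hdist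
end

section
/- Let G be a group, H < G a co-amenable subgroup, and G' < G a subgroup of finite index. Then G' ∩ H is co-amenable in G'. -/
open Set

/-- An invariant mean for an action of `G` on `α`: a finitely additive invariant
probability "measure" defined on all subsets of `α`. -/
def HasInvariantMean (G : Type*) [Group G] (α : Type*) [MulAction G α] : Prop :=
  ∃ m : Set α → ℝ, m Set.univ = 1 ∧ (∀ A : Set α, 0 ≤ m A) ∧
    (∀ A B : Set α, Disjoint A B → m (A ∪ B) = m A + m B) ∧
    (∀ (g : G) (A : Set α), m ((g • ·) '' A) = m A)

/-- A subgroup `H ≤ G` is co-amenable if there is a `G`-invariant mean on `G/H`. -/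
def Coamenable {G : Type*} [Group G] (H : Subgroup G) : Prop :=
  HasInvariantMean G (G ⧸ H)

/-!
Restricting an invariant mean `m` on `G/H` to the image `S` of `G'/(G' ∩ H)` gives a
`G'`-invariant finitely additive function. Finitely many translates `g • S` (one per coset of
`G'`) cover `G/H`, so `1 ≤ [G : G'] · m S` and `m S > 0`; normalizing by `m S` yields a
`G'`-invariant mean on `G'/(G' ∩ H)`.
-/

open scoped Pointwise
open Function

structure IsContent {α : Type*} (m : Set α → ℝ) : Prop where
  nonneg : ∀ A, 0 ≤ m A
  union_of_disjoint : ∀ A B, Disjoint A B → m (A ∪ B) = m A + m B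

namespace IsContent

variable {α : Type*} {m : Set α → ℝ}

theorem empty (hm : IsContent m) : m ∅ = 0 := by
  have h := hm.union_of_disjoint ∅ ∅ (disjoint_empty _)
  rw [union_empty] at h
  linarith

theorem mono (hm : IsContent m) {A B : Set α} (hAB : A ⊆ B) : m A ≤ m B := by
  have h := hm.union_of_disjoint A (B \ A) disjoint_sdiff_right
  rw [union_sdiff_cancel hAB] at h
  linarith [hm.nonneg (B \ A)]

theorem union_le (hm : IsContent m) (A B : Set α) : m (A ∪ B) ≤ m A + m B := by
  have h := hm.union_of_disjoint A (B \ A) disjoint_sdiff_right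
  rw [union_sdiff_self] at h
  linarith [hm.mono (sdiff_subset : B \ A ⊆ B)]

theorem biUnion_le (hm : IsContent m) {ι : Type*} (t : Finset ι) (A : ι → Set α) :
    m (⋃ i ∈ t, A i) ≤ ∑ i ∈ t, m (A i) := by
  classical
  induction t using Finset.induction with
  | empty => simp [hm.empty]
  | insert a t ha ih =>
    rw [Finset.set_biUnion_insert, Finset.sum_insert ha]
    linarith [hm.union_le (A a) (⋃ i ∈ t, A i)]

theorem iUnion_le (hm : IsContent m) {ι : Type*} [Fintype ι] (A : ι → Set α) :
    m (⋃ i, A i) ≤ ∑ i, m (A i) := by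
  simpa using hm.biUnion_le Finset.univ A

end IsContent

section InvariantMean

variable {G α : Type*} [Group G] [MulAction G α]

theorem hasInvariantMean_iff :
    HasInvariantMean G α ↔
      ∃ m : Set α → ℝ, IsContent m ∧ m univ = 1 ∧ ∀ (g : G) (A : Set α), m (g • A) = m A :=
  ⟨fun ⟨m, huniv, h0, hadd, hinv⟩ => ⟨m, ⟨h0, hadd⟩, huniv, hinv⟩,
    fun ⟨m, ⟨h0, hadd⟩, huniv, hinv⟩ => ⟨m, huniv, h0, hadd, hinv⟩⟩

theorem IsContent.pos_of_iUnion_smul_eq_univ {m : Set α → ℝ} (hm : IsContent m)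
    (huniv : m univ = 1) (hinv : ∀ (g : G) (A : Set α), m (g • A) = m A)
    {ι : Type*} [Finite ι] (g : ι → G) {s : Set α} (hs : ⋃ i, g i • s = univ) : 0 < m s := by
  cases nonempty_fintype ι
  have hcard : 1 ≤ Fintype.card ι * m s := by
    calc 1 = m (⋃ i, g i • s) := by rw [hs, huniv]
      _ ≤ ∑ i, m (g i • s) := hm.iUnion_le _
      _ = Fintype.card ι * m s := by simp [hinv]
  exact pos_of_mul_pos_right (by linarith) (Nat.cast_nonneg _)

theorem HasInvariantMean.of_injective_of_iUnion_smul_range (h : HasInvariantMean G α)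
    {K β : Type*} [Group K] [MulAction K β] {φ : K → G} (f : β →ₑ[φ] α) (hf : Injective f)
    {ι : Type*} [Finite ι] (g : ι → G) (hcover : ⋃ i, g i • range f = univ) :
    HasInvariantMean K β := by
  obtain ⟨m, hm, huniv, hinv⟩ := hasInvariantMean_iff.1 h
  have hpos := hm.pos_of_iUnion_smul_eq_univ huniv hinv g hcover
  refine hasInvariantMean_iff.2 ⟨fun A => m (f '' A) / m (range f), ⟨?_, ?_⟩, ?_, ?_⟩
  · exact fun A => div_nonneg (hm.nonneg _) hpos.le
  · intro A B hAB
    rw [image_union, hm.union_of_disjoint _ _ ((disjoint_image_iff hf).2 hAB), add_div]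
  · show m (f '' univ) / _ = 1
    rw [image_univ, div_self hpos.ne']
  · intro k A
    have : f '' (k • A) = φ k • f '' A := by
      simp only [← image_smul, image_image, map_smulₛₗ]
    simp only [this, hinv]

end InvariantMean

namespace QuotientGroup

variable {G : Type*} [Group G] (H K : Subgroup G)

def subgroupOfMulActionHom : K ⧸ H.subgroupOf K →ₑ[((↑) : K → G)] G ⧸ H where
  toFun := Quotient.map' (↑) fun a b => by
    simp [leftRel_apply, Subgroup.mem_subgroupOf]
  map_smul' k q := Quotient.inductionOn' q fun _ => rfl

@[simp]
theorem subgroupOfMulActionHom_mk (k : K) :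
    subgroupOfMulActionHom H K (k : K ⧸ H.subgroupOf K) = ((k : G) : G ⧸ H) :=
  rfl

theorem subgroupOfMulActionHom_injective : Injective (subgroupOfMulActionHom H K) := by
  intro a b hab
  obtain ⟨a, rfl⟩ := mk_surjective a
  obtain ⟨b, rfl⟩ := mk_surjective b
  rw [subgroupOfMulActionHom_mk, subgroupOfMulActionHom_mk, QuotientGroup.eq] at hab
  rwa [QuotientGroup.eq, Subgroup.mem_subgroupOf]

theorem iUnion_out_smul_range_subgroupOfMulActionHom :
    ⋃ c : G ⧸ K, c.out • range (subgroupOfMulActionHom H K) = univ := by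
  refine eq_univ_of_forall fun q => ?_
  obtain ⟨x, rfl⟩ := mk_surjective q
  obtain ⟨k, hk⟩ := mk_out_eq_mul K x
  refine mem_iUnion.2 ⟨mk x, _, ⟨mk k⁻¹, rfl⟩, ?_⟩
  simp [hk]

end QuotientGroup

/-- If `H` is co-amenable in `G` and `G'` has finite index in `G`, then `G' ∩ H`
is co-amenable in `G'`. -/
theorem coamenable_inf_of_finiteIndex {G : Type*} [Group G] (H G' : Subgroup G)
    (hH : Coamenable H) (hG' : G'.FiniteIndex) :
    Coamenable (H.subgroupOf G') :=
  hH.of_injective_of_iUnion_smul_range (QuotientGroup.subgroupOfMulActionHom H G')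
    (QuotientGroup.subgroupOfMulActionHom_injective H G') (fun c : G ⧸ G' => c.out)
    (QuotientGroup.iUnion_out_smul_range_subgroupOfMulActionHom H G')
end
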